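/- arXiv:2412.11759 — 3 statements merged into one kernel-verified Lean document; each statement's English description precedes it below -/
import Mathlib

section
/- The external activity complex Δ_w(M_1,M_2) is a pure simplicial complex of dimension rank(D(M_1,M_2)) + n − 1. -/
open Finset

/-- A matroid on the ground set `Fin n`, presented by its rank function. -/
structure FinMatroid (n : ℕ) where
  rank : Finset (Fin n) → ℕ
  rank_empty : rank ∅ = 0
  rank_le_card : ∀ S : Finset (Fin n), rank S ≤ S.card
  rank_mono : ∀ ⦃S T : Finset (Fin n)⦄, S ⊆ T → rank S ≤ rank T
  rank_submod : ∀ S T : Finset (Fin n),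
    rank (S ∪ T) + rank (S ∩ T) ≤ rank S + rank T

namespace FinMatroid

variable {n : ℕ}

/-- A set is independent if its rank equals its cardinality. -/
def Indep (M : FinMatroid n) (I : Finset (Fin n)) : Prop := M.rank I = I.card

/-- The rank of the matroid (rank of the full ground set). -/
def rk (M : FinMatroid n) : ℕ := M.rank Finset.univ

/-- A matroid is loopless if every singleton has positive rank. -/
def Loopless (M : FinMatroid n) : Prop := ∀ i : Fin n, 0 < M.rank {i}

/-- Two matroids on `[n]` have no common loops. -/
def NoCommonLoops (M₁ M₂ : FinMatroid n) : Prop :=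
  ∀ i : Fin n, 0 < M₁.rank {i} ∨ 0 < M₂.rank {i}

/-- A valid family for the Dilworth minimum: pairwise disjoint nonempty
subsets of `S`. -/
def ValidFamily (S : Finset (Fin n)) (𝒯 : Finset (Finset (Fin n))) : Prop :=
  (∀ T ∈ 𝒯, T ⊆ S ∧ T.Nonempty) ∧
    ∀ T ∈ 𝒯, ∀ T' ∈ 𝒯, T ≠ T' → Disjoint T T'

/-- The value `Σ_i (rank_{M₁}(T_i) + rank_{M₂}(T_i) − 1) + |S \ ∪ T_i|`
associated to a family. -/
def famValue (M₁ M₂ : FinMatroid n) (S : Finset (Fin n))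
    (𝒯 : Finset (Finset (Fin n))) : ℕ :=
  (∑ T ∈ 𝒯, (M₁.rank T + M₂.rank T - 1)) + (S \ 𝒯.sup id).card

/-- The rank function of the diagonal Dilworth truncation `D(M₁,M₂)`. -/
noncomputable def rankD (M₁ M₂ : FinMatroid n) (S : Finset (Fin n)) : ℕ :=
  sInf {v : ℕ | ∃ 𝒯 : Finset (Finset (Fin n)),
    ValidFamily S 𝒯 ∧ v = famValue M₁ M₂ S 𝒯}

/-- Independence in the diagonal Dilworth truncation. -/
def IndepD (M₁ M₂ : FinMatroid n) (I : Finset (Fin n)) : Prop :=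
  rankD M₁ M₂ I = I.card

/-- Circuits of the diagonal Dilworth truncation: minimal dependent sets. -/
def CircuitD (M₁ M₂ : FinMatroid n) (C : Finset (Fin n)) : Prop :=
  ¬ IndepD M₁ M₂ C ∧ ∀ C' : Finset (Fin n), C' ⊂ C → IndepD M₁ M₂ C'

end FinMatroid

namespace FinMatroid

variable {n : ℕ}

/-- A decomposition of `C` into disjoint sets independent in `M₁` and `M₂`
respectively. -/
def Decomp (M₁ M₂ : FinMatroid n) (C I₁ I₂ : Finset (Fin n)) : Prop :=
  Disjoint I₁ I₂ ∧ I₁ ∪ I₂ = C ∧ M₁.Indep I₁ ∧ M₂.Indep I₂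

/-- The `w`-weight of the monomial `y_{I₁} x_{I₂}`. -/
def wtD (wx wy : Fin n → ℝ) (I₁ I₂ : Finset (Fin n)) : ℝ :=
  (∑ i ∈ I₁, wy i) + (∑ i ∈ I₂, wx i)

/-- The `w`-initial decomposition of a circuit: a decomposition of maximal
`w`-weight. -/
def InitialDecomp (M₁ M₂ : FinMatroid n) (wx wy : Fin n → ℝ)
    (C I₁ I₂ : Finset (Fin n)) : Prop :=
  Decomp M₁ M₂ C I₁ I₂ ∧
    ∀ J₁ J₂ : Finset (Fin n), Decomp M₁ M₂ C J₁ J₂ →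
      wtD wx wy J₁ J₂ ≤ wtD wx wy I₁ I₂

/-- `C` is the fundamental circuit of `i` with respect to `B` in `D(M₁,M₂)`. -/
def FundCircuitD (M₁ M₂ : FinMatroid n) (B : Finset (Fin n)) (i : Fin n)
    (C : Finset (Fin n)) : Prop :=
  CircuitD M₁ M₂ C ∧ C ⊆ insert i B ∧ i ∈ C

/-- `i` is externally 1-active for `B` (lies in the `M₁`-part of the
`w`-initial decomposition of its fundamental circuit). -/
def ExtActive1 (M₁ M₂ : FinMatroid n) (wx wy : Fin n → ℝ)
    (B : Finset (Fin n)) (i : Fin n) : Prop :=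
  ∃ C I₁ I₂ : Finset (Fin n), FundCircuitD M₁ M₂ B i C ∧
    InitialDecomp M₁ M₂ wx wy C I₁ I₂ ∧ i ∈ I₁

/-- `i` is externally 2-active for `B`. -/
def ExtActive2 (M₁ M₂ : FinMatroid n) (wx wy : Fin n → ℝ)
    (B : Finset (Fin n)) (i : Fin n) : Prop :=
  ∃ C I₁ I₂ : Finset (Fin n), FundCircuitD M₁ M₂ B i C ∧
    InitialDecomp M₁ M₂ wx wy C I₁ I₂ ∧ i ∈ I₂

/-- `B` is a basis of the restriction of `D(M₁,M₂)` to the ground set `E`. -/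
def BasisOn (M₁ M₂ : FinMatroid n) (E B : Finset (Fin n)) : Prop :=
  B ⊆ E ∧ rankD M₁ M₂ B = B.card ∧ rankD M₁ M₂ B = rankD M₁ M₂ E

/-- `F` is a facet of the external activity complex `Δ_w(M₁|E, M₂|E)`:
`F = {x_j : j ∈ B ∪ E₁(B)} ∪ {y_j : j ∈ B ∪ E₂(B)}` for a basis `B`, where
`x`-vertices are encoded as `Sum.inl` and `y`-vertices as `Sum.inr`. -/
def IsFacetOn (M₁ M₂ : FinMatroid n) (wx wy : Fin n → ℝ)
    (E : Finset (Fin n)) (F : Finset (Fin n ⊕ Fin n)) : Prop :=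
  ∃ B E₁ E₂ : Finset (Fin n), BasisOn M₁ M₂ E B ∧
    (∀ i : Fin n, i ∈ E₁ ↔ i ∈ E ∧ i ∉ B ∧ ExtActive1 M₁ M₂ wx wy B i) ∧
    (∀ i : Fin n, i ∈ E₂ ↔ i ∈ E ∧ i ∉ B ∧ ExtActive2 M₁ M₂ wx wy B i) ∧
    F = ((B ∪ E₁).image Sum.inl) ∪ ((B ∪ E₂).image Sum.inr)

/-- The weight vector `w = (w_x, w_y)` is generic: its `2n` entries are
linearly independent over `ℚ`. -/
def Generic (wx wy : Fin n → ℝ) : Prop :=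
  LinearIndependent ℚ (Sum.elim wx wy)

end FinMatroid

namespace FinMatroid

variable {n : ℕ}

/-- `f S = rank₁ S + rank₂ S`, the key submodular function. -/
def f2 (M₁ M₂ : FinMatroid n) (S : Finset (Fin n)) : ℕ := M₁.rank S + M₂.rank S

lemma f2_mono (M₁ M₂ : FinMatroid n) {S T : Finset (Fin n)} (h : S ⊆ T) :
    f2 M₁ M₂ S ≤ f2 M₁ M₂ T :=
  Nat.add_le_add (M₁.rank_mono h) (M₂.rank_mono h)

lemma f2_submod (M₁ M₂ : FinMatroid n) (S T : Finset (Fin n)) :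
    f2 M₁ M₂ (S ∪ T) + f2 M₁ M₂ (S ∩ T) ≤ f2 M₁ M₂ S + f2 M₁ M₂ T := by
  have h1 := M₁.rank_submod S T
  have h2 := M₂.rank_submod S T
  unfold f2; omega

lemma validFamily_empty (S : Finset (Fin n)) : ValidFamily S (∅ : Finset (Finset (Fin n))) := by
  constructor <;> simp

lemma famValue_empty (M₁ M₂ : FinMatroid n) (S : Finset (Fin n)) :
    famValue M₁ M₂ S (∅ : Finset (Finset (Fin n))) = S.card := by
  simp [famValue]

lemma rankD_le_famValue (M₁ M₂ : FinMatroid n) {S : Finset (Fin n)}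
    {𝒯 : Finset (Finset (Fin n))} (h : ValidFamily S 𝒯) :
    rankD M₁ M₂ S ≤ famValue M₁ M₂ S 𝒯 :=
  Nat.sInf_le ⟨𝒯, h, rfl⟩

lemma rankD_le_card (M₁ M₂ : FinMatroid n) (S : Finset (Fin n)) :
    rankD M₁ M₂ S ≤ S.card := by
  simpa [famValue_empty] using rankD_le_famValue M₁ M₂ (validFamily_empty (n := n) S)

lemma exists_optimal_family (M₁ M₂ : FinMatroid n) (S : Finset (Fin n)) :
    ∃ 𝒯, ValidFamily S 𝒯 ∧ rankD M₁ M₂ S = famValue M₁ M₂ S 𝒯 := by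
  have hne : {v : ℕ | ∃ 𝒯 : Finset (Finset (Fin n)),
      ValidFamily S 𝒯 ∧ v = famValue M₁ M₂ S 𝒯}.Nonempty :=
    ⟨famValue M₁ M₂ S ∅, ∅, validFamily_empty S, rfl⟩
  exact Nat.sInf_mem hne

lemma le_rankD (M₁ M₂ : FinMatroid n) {S : Finset (Fin n)} {v : ℕ}
    (h : ∀ 𝒯, ValidFamily S 𝒯 → v ≤ famValue M₁ M₂ S 𝒯) :
    v ≤ rankD M₁ M₂ S := by
  obtain ⟨𝒯, h𝒯, heq⟩ := exists_optimal_family M₁ M₂ S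
  rw [heq]; exact h 𝒯 h𝒯

lemma rankD_empty (M₁ M₂ : FinMatroid n) : rankD M₁ M₂ (∅ : Finset (Fin n)) = 0 :=
  Nat.le_zero.mp (by simpa using rankD_le_card M₁ M₂ ∅)

lemma indepD_empty (M₁ M₂ : FinMatroid n) : IndepD M₁ M₂ (∅ : Finset (Fin n)) := by
  simp [IndepD, rankD_empty]

/-- Characterization of independence in `D(M₁,M₂)`. -/
lemma indepD_iff (M₁ M₂ : FinMatroid n) (S : Finset (Fin n)) :
    IndepD M₁ M₂ S ↔ ∀ T ⊆ S, T.Nonempty → T.card + 1 ≤ f2 M₁ M₂ T := by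
  constructor
  · intro hI T hTS hTne
    by_contra hlt
    push_neg at hlt
    have hval : ValidFamily S {T} := by
      constructor
      · intro T' hT'; simp at hT'; subst hT'; exact ⟨hTS, hTne⟩
      · intro T' hT' T'' hT''; simp at hT' hT''; subst hT'; subst hT''; simp
    have hle := rankD_le_famValue M₁ M₂ hval
    have hfv : famValue M₁ M₂ S {T} ≤ S.card - 1 := by
      have : (S \ ({T} : Finset (Finset (Fin n))).sup id).card = S.card - T.card := by
        simp only [Finset.sup_singleton, id]
        rw [Finset.card_sdiff_of_subset hTS]
      rw [famValue, Finset.sum_singleton, this]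
      have h1 : 1 ≤ T.card := hTne.card_pos
      have h2 : T.card ≤ S.card := Finset.card_le_card hTS
      have h3 : M₁.rank T + M₂.rank T ≤ T.card := by unfold f2 at hlt; omega
      omega
    have hc : 1 ≤ S.card := (hTne.card_pos.trans_le (Finset.card_le_card hTS))
    rw [IndepD] at hI
    omega
  · intro hall
    have hub := rankD_le_card M₁ M₂ S
    have hlb : S.card ≤ rankD M₁ M₂ S := by
      apply le_rankD
      intro 𝒯 h𝒯
      rw [famValue]
      have hsum : ∑ T ∈ 𝒯, T.card ≤ ∑ T ∈ 𝒯, (M₁.rank T + M₂.rank T - 1) := by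
        apply Finset.sum_le_sum
        intro T hT
        have := hall T (h𝒯.1 T hT).1 (h𝒯.1 T hT).2
        unfold f2 at this; omega
      have hcup : (𝒯.sup id).card = ∑ T ∈ 𝒯, T.card := by
        rw [Finset.sup_eq_biUnion]
        exact Finset.card_biUnion (fun T hT T' hT' hne => h𝒯.2 T hT T' hT' hne)
      have hS : S.card ≤ (𝒯.sup id).card + (S \ 𝒯.sup id).card := by
        have : S ⊆ (𝒯.sup id) ∪ (S \ 𝒯.sup id) := by
          intro x hx
          by_cases hxc : x ∈ 𝒯.sup id
          · exact Finset.mem_union_left _ hxc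
          · exact Finset.mem_union_right _ (Finset.mem_sdiff.mpr ⟨hx, hxc⟩)
        calc S.card ≤ ((𝒯.sup id) ∪ (S \ 𝒯.sup id)).card := Finset.card_le_card this
          _ ≤ _ := Finset.card_union_le _ _
      omega
    exact Nat.le_antisymm hub hlb

lemma indepD_subset {M₁ M₂ : FinMatroid n} {S T : Finset (Fin n)}
    (h : IndepD M₁ M₂ S) (hTS : T ⊆ S) : IndepD M₁ M₂ T := by
  rw [indepD_iff] at h ⊢
  exact fun U hU hne => h U (hU.trans hTS) hne

end FinMatroid

namespace FinMatroid

variable {n : ℕ}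

lemma rankD_mono (M₁ M₂ : FinMatroid n) {S T : Finset (Fin n)} (hST : S ⊆ T) :
    rankD M₁ M₂ S ≤ rankD M₁ M₂ T := by
  classical
  obtain ⟨𝒯, h𝒯, heq⟩ := exists_optimal_family M₁ M₂ T
  rw [heq]
  set 𝒯' := 𝒯.filter (fun U => (U ∩ S).Nonempty) with h𝒯'
  set 𝒮 : Finset (Finset (Fin n)) := 𝒯'.image (fun U => U ∩ S) with h𝒮
  have hmem𝒯' : ∀ U ∈ 𝒯', U ∈ 𝒯 ∧ (U ∩ S).Nonempty := by
    intro U hU; rw [h𝒯', Finset.mem_filter] at hU; exact hU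
  have hinj : Set.InjOn (fun U => U ∩ S) ↑𝒯' := by
    intro U hU U' hU' hE
    simp only [Finset.mem_coe] at hU hU'
    by_contra hne
    have hd := h𝒯.2 U (hmem𝒯' U hU).1 U' (hmem𝒯' U' hU').1 hne
    obtain ⟨x, hx⟩ := (hmem𝒯' U hU).2
    have hx' : x ∈ U' ∩ S := by
      have : U ∩ S = U' ∩ S := hE
      rw [← this]; exact hx
    exact Finset.disjoint_left.mp hd (Finset.mem_inter.mp hx).1 (Finset.mem_inter.mp hx').1
  have hval : ValidFamily S 𝒮 := by
    constructor
    · intro V hV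
      obtain ⟨U, hU, rfl⟩ := Finset.mem_image.mp hV
      exact ⟨Finset.inter_subset_right, (hmem𝒯' U hU).2⟩
    · intro V hV V' hV' hne
      obtain ⟨U, hU, rfl⟩ := Finset.mem_image.mp hV
      obtain ⟨U', hU', rfl⟩ := Finset.mem_image.mp hV'
      have hUne : U ≠ U' := fun hh => hne (by rw [hh])
      have hd := h𝒯.2 U (hmem𝒯' U hU).1 U' (hmem𝒯' U' hU').1 hUne
      exact Finset.disjoint_of_subset_left Finset.inter_subset_left
        (Finset.disjoint_of_subset_right Finset.inter_subset_left hd)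
  refine (rankD_le_famValue M₁ M₂ hval).trans ?_
  rw [famValue, famValue]
  have hsum : ∑ V ∈ 𝒮, (M₁.rank V + M₂.rank V - 1) ≤
      ∑ U ∈ 𝒯, (M₁.rank U + M₂.rank U - 1) := by
    rw [h𝒮, Finset.sum_image hinj]
    calc ∑ U ∈ 𝒯', (M₁.rank (U ∩ S) + M₂.rank (U ∩ S) - 1)
        ≤ ∑ U ∈ 𝒯', (M₁.rank U + M₂.rank U - 1) := by
          apply Finset.sum_le_sum
          intro U hU
          have h1 : M₁.rank (U ∩ S) ≤ M₁.rank U :=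
            M₁.rank_mono Finset.inter_subset_left
          have h2 : M₂.rank (U ∩ S) ≤ M₂.rank U :=
            M₂.rank_mono Finset.inter_subset_left
          omega
      _ ≤ ∑ U ∈ 𝒯, (M₁.rank U + M₂.rank U - 1) :=
          Finset.sum_le_sum_of_subset (Finset.filter_subset _ _)
  have hsd : S \ 𝒮.sup id ⊆ T \ 𝒯.sup id := by
    intro x hx
    rw [Finset.mem_sdiff] at hx ⊢
    refine ⟨hST hx.1, fun hxc => ?_⟩
    rw [Finset.mem_sup] at hxc
    obtain ⟨U, hU, hxU⟩ := hxc
    have hU' : U ∈ 𝒯' := by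
      rw [h𝒯', Finset.mem_filter]
      exact ⟨hU, ⟨x, Finset.mem_inter.mpr ⟨hxU, hx.1⟩⟩⟩
    exact hx.2 (Finset.mem_sup.mpr ⟨U ∩ S, Finset.mem_image_of_mem _ hU',
      Finset.mem_inter.mpr ⟨hxU, hx.1⟩⟩)
  exact Nat.add_le_add hsum (Finset.card_le_card hsd)

/-- Every dependent set contains a circuit. -/
lemma exists_circuit {M₁ M₂ : FinMatroid n} {S : Finset (Fin n)}
    (hS : ¬ IndepD M₁ M₂ S) : ∃ C ⊆ S, CircuitD M₁ M₂ C := by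
  classical
  set P := S.powerset.filter (fun C => ¬ IndepD M₁ M₂ C) with hP
  have hSP : S ∈ P := by
    rw [hP, Finset.mem_filter, Finset.mem_powerset]; exact ⟨Finset.Subset.refl S, hS⟩
  obtain ⟨C, hC, hmin⟩ := Finset.exists_min_image P Finset.card ⟨S, hSP⟩
  rw [hP, Finset.mem_filter, Finset.mem_powerset] at hC
  refine ⟨C, hC.1, hC.2, fun C' hC' => ?_⟩
  by_contra hdep
  have : C ∈ P := by rw [hP, Finset.mem_filter, Finset.mem_powerset]; exact ⟨hC.1, hC.2⟩
  have hC'P : C' ∈ P := by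
    rw [hP, Finset.mem_filter, Finset.mem_powerset]
    exact ⟨hC'.subset.trans hC.1, hdep⟩
  have := hmin C' hC'P
  exact absurd (Finset.card_lt_card hC') (by omega)

lemma circuitD_f2_le {M₁ M₂ : FinMatroid n} {C : Finset (Fin n)}
    (hC : CircuitD M₁ M₂ C) : f2 M₁ M₂ C ≤ C.card := by
  have hdep := hC.1
  rw [indepD_iff] at hdep
  push_neg at hdep
  obtain ⟨T, hTC, hTne, hlt⟩ := hdep
  rcases eq_or_ne T C with rfl | hne
  · omega
  · exfalso
    have : IndepD M₁ M₂ T := hC.2 T (Finset.ssubset_iff_subset_ne.mpr ⟨hTC, hne⟩)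
    rw [indepD_iff] at this
    exact absurd (this T (Finset.Subset.refl T) hTne) (by omega)

lemma circuitD_nonempty {M₁ M₂ : FinMatroid n} {C : Finset (Fin n)}
    (hC : CircuitD M₁ M₂ C) : C.Nonempty := by
  rcases Finset.eq_empty_or_nonempty C with rfl | h
  · exact absurd (indepD_empty M₁ M₂) hC.1
  · exact h

/-- Proper nonempty subsets of independent sets satisfy `f2 ≥ card + 1`. -/
lemma indep_f2 {M₁ M₂ : FinMatroid n} {S T : Finset (Fin n)}
    (hS : IndepD M₁ M₂ S) (hTS : T ⊆ S) (hne : T.Nonempty) :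
    T.card + 1 ≤ f2 M₁ M₂ T := (indepD_iff M₁ M₂ S).mp hS T hTS hne

/-- Uniqueness of the circuit inside `insert i B` for `B` independent. -/
lemma circuit_unique {M₁ M₂ : FinMatroid n} {B C C' : Finset (Fin n)} {i : Fin n}
    (hB : IndepD M₁ M₂ B)
    (hC : CircuitD M₁ M₂ C) (hCB : C ⊆ insert i B) (hiC : i ∈ C)
    (hC' : CircuitD M₁ M₂ C') (hCB' : C' ⊆ insert i B) (hiC' : i ∈ C') :
    C = C' := by
  classical
  by_contra hne
  have hsub : ∀ {D D' : Finset (Fin n)}, CircuitD M₁ M₂ D → CircuitD M₁ M₂ D' →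
      D ⊆ D' → D = D' := by
    intro D D' hD hD' hss
    by_contra hh
    exact hD.1 (hD'.2 D (Finset.ssubset_iff_subset_ne.mpr ⟨hss, hh⟩))
  have h1 : ¬ C ⊆ C' := fun hh => hne (hsub hC hC' hh)
  have h2 : ¬ C' ⊆ C := fun hh => hne ((hsub hC' hC hh).symm)
  -- C ∩ C' is a nonempty proper subset of C, hence independent
  have hiI : i ∈ C ∩ C' := Finset.mem_inter.mpr ⟨hiC, hiC'⟩
  have hint_proper : C ∩ C' ⊂ C := by
    refine Finset.ssubset_iff_subset_ne.mpr ⟨Finset.inter_subset_left, fun hh => ?_⟩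
    exact h1 (by rw [← hh]; exact Finset.inter_subset_right)
  have hint_indep := hC.2 _ hint_proper
  have hint_f2 : (C ∩ C').card + 1 ≤ f2 M₁ M₂ (C ∩ C') :=
    indep_f2 hint_indep (Finset.Subset.refl _) ⟨i, hiI⟩
  have hCf := circuitD_f2_le hC
  have hC'f := circuitD_f2_le hC'
  have hsm := f2_submod M₁ M₂ C C'
  have hcards : (C ∪ C').card + (C ∩ C').card = C.card + C'.card :=
    Finset.card_union_add_card_inter C C'
  have hU : f2 M₁ M₂ (C ∪ C') + 1 ≤ (C ∪ C').card := by omega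
  -- now (C ∪ C') \ {i} is a nonempty subset of B
  set U := (C ∪ C') \ {i} with hUdef
  have hUB : U ⊆ B := by
    intro x hx
    rw [hUdef, Finset.mem_sdiff, Finset.mem_singleton] at hx
    rcases Finset.mem_union.mp hx.1 with hxu | hxu
    · rcases Finset.mem_insert.mp (hCB hxu) with hh | hh
      · exact absurd hh hx.2
      · exact hh
    · rcases Finset.mem_insert.mp (hCB' hxu) with hh | hh
      · exact absurd hh hx.2
      · exact hh
  have hUne : U.Nonempty := by
    obtain ⟨x, hxC, hxC'⟩ := Finset.not_subset.mp h1
    refine ⟨x, ?_⟩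
    rw [hUdef, Finset.mem_sdiff, Finset.mem_singleton]
    exact ⟨Finset.mem_union_left _ hxC, fun hh => hxC' (hh ▸ hiC')⟩
  have hUf := indep_f2 hB hUB hUne
  have hUsub : U ⊆ C ∪ C' := Finset.sdiff_subset
  have hUcard : U.card + 1 ≤ (C ∪ C').card + 1 := by
    have := Finset.card_le_card hUsub; omega
  have hUcard' : (C ∪ C').card ≤ U.card + 1 := by
    rw [hUdef]
    have : (C ∪ C') \ {i} = (C ∪ C').erase i := by
      rw [Finset.erase_eq]
    rw [this]
    have : ((C ∪ C').erase i).card + 1 = (C ∪ C').card :=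
      Finset.card_erase_add_one (Finset.mem_union_left _ hiC)
    omega
  have hmono := f2_mono M₁ M₂ hUsub
  omega

end FinMatroid

namespace FinMatroid

variable {n : ℕ}

/-- Contraction of a matroid by a set `A`. -/
def contract (M : FinMatroid n) (A : Finset (Fin n)) : FinMatroid n where
  rank S := M.rank (S ∪ A) - M.rank A
  rank_empty := by simp
  rank_le_card S := by
    show M.rank (S ∪ A) - M.rank A ≤ S.card
    have h := M.rank_submod S A
    have h2 := M.rank_le_card S
    omega
  rank_mono S T hST := by
    show M.rank (S ∪ A) - M.rank A ≤ M.rank (T ∪ A) - M.rank A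
    have := M.rank_mono (Finset.union_subset_union_left hST (t := A))
    omega
  rank_submod S T := by
    show M.rank ((S ∪ T) ∪ A) - M.rank A + (M.rank ((S ∩ T) ∪ A) - M.rank A) ≤
      (M.rank (S ∪ A) - M.rank A) + (M.rank (T ∪ A) - M.rank A)
    have key : M.rank ((S ∪ A) ∪ (T ∪ A)) + M.rank ((S ∪ A) ∩ (T ∪ A)) ≤
        M.rank (S ∪ A) + M.rank (T ∪ A) := M.rank_submod _ _
    have e1 : (S ∪ A) ∪ (T ∪ A) = (S ∪ T) ∪ A := by
      ext x; simp only [Finset.mem_union]; tauto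
    have e2 : (S ∩ T) ∪ A ⊆ (S ∪ A) ∩ (T ∪ A) := by
      intro x hx
      simp only [Finset.mem_union, Finset.mem_inter] at hx ⊢
      tauto
    have h2 := M.rank_mono e2
    rw [e1] at key
    have m1 : M.rank A ≤ M.rank (S ∪ A) := M.rank_mono Finset.subset_union_right
    have m2 : M.rank A ≤ M.rank (T ∪ A) := M.rank_mono Finset.subset_union_right
    have m3 : M.rank A ≤ M.rank ((S ∪ T) ∪ A) := M.rank_mono Finset.subset_union_right
    have m4 : M.rank A ≤ M.rank ((S ∩ T) ∪ A) := M.rank_mono Finset.subset_union_right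
    omega

lemma contract_rank (M : FinMatroid n) (A S : Finset (Fin n)) :
    (M.contract A).rank S = M.rank (S ∪ A) - M.rank A := rfl

/-- The matroid-union / partition theorem for two matroids. -/
lemma union_partition : ∀ (m : ℕ) (C : Finset (Fin n)) (M₁ M₂ : FinMatroid n),
    C.card ≤ m →
    (∀ T ⊆ C, T.Nonempty → T.card ≤ M₁.rank T + M₂.rank T) →
    ∃ I₁ I₂ : Finset (Fin n), Disjoint I₁ I₂ ∧ I₁ ∪ I₂ = C ∧
      M₁.Indep I₁ ∧ M₂.Indep I₂ := by
  intro m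
  induction m with
  | zero =>
    intro C M₁ M₂ hcard _
    have : C = ∅ := Finset.card_eq_zero.mp (Nat.le_zero.mp hcard)
    subst this
    exact ⟨∅, ∅, by simp, by simp, by simp [Indep, rank_empty], by simp [Indep, rank_empty]⟩
  | succ m ih =>
    intro C M₁ M₂ hcard hcond
    rcases Finset.eq_empty_or_nonempty C with rfl | hCne
    · exact ⟨∅, ∅, by simp, by simp, by simp [Indep, rank_empty], by simp [Indep, rank_empty]⟩
    classical
    by_cases htight : ∃ T, T ⊆ C ∧ T ≠ C ∧ T.Nonempty ∧
        M₁.rank T + M₂.rank T = T.card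
    · obtain ⟨T, hTC, hTneC, hTne, hTt⟩ := htight
      have hTcard : T.card < C.card := Finset.card_lt_card
        (Finset.ssubset_iff_subset_ne.mpr ⟨hTC, hTneC⟩)
      obtain ⟨J₁, J₂, hJd, hJu, hJ₁, hJ₂⟩ := ih T M₁ M₂ (by omega)
        (fun U hU hUne => hcond U (hU.trans hTC) hUne)
      have hJ₁T : J₁ ⊆ T := hJu ▸ Finset.subset_union_left
      have hJ₂T : J₂ ⊆ T := hJu ▸ Finset.subset_union_right
      have hJcards : J₁.card + J₂.card = T.card := by
        rw [← hJu]; exact (Finset.card_union_of_disjoint hJd).symm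
      have hJ₁le : J₁.card ≤ M₁.rank T := hJ₁ ▸ M₁.rank_mono hJ₁T
      have hJ₂le : J₂.card ≤ M₂.rank T := hJ₂ ▸ M₂.rank_mono hJ₂T
      have hJ₁eq : J₁.card = M₁.rank T := by omega
      have hJ₂eq : J₂.card = M₂.rank T := by omega
      -- recurse on C \ T with contractions
      have hsd : (C \ T).card < C.card := by
        rw [Finset.card_sdiff_of_subset hTC]
        have := Finset.card_le_card hTC
        have := hTne.card_pos
        omega
      have hcond2 : ∀ S ⊆ C \ T, S.Nonempty → S.card ≤
          (M₁.contract T).rank S + (M₂.contract T).rank S := by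
        intro S hS hSne
        rw [contract_rank, contract_rank]
        have hSC : S ∪ T ⊆ C := Finset.union_subset ((hS.trans Finset.sdiff_subset)) hTC
        have hST : Disjoint S T :=
          Finset.disjoint_of_subset_left hS (Finset.sdiff_disjoint)
        have hcard' : (S ∪ T).card = S.card + T.card := Finset.card_union_of_disjoint hST
        have h1 := hcond (S ∪ T) hSC ⟨hSne.choose, Finset.mem_union_left _ hSne.choose_spec⟩
        have m1 : M₁.rank T ≤ M₁.rank (S ∪ T) := M₁.rank_mono Finset.subset_union_right
        have m2 : M₂.rank T ≤ M₂.rank (S ∪ T) := M₂.rank_mono Finset.subset_union_right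
        omega
      obtain ⟨K₁, K₂, hKd, hKu, hK₁, hK₂⟩ := ih (C \ T) (M₁.contract T) (M₂.contract T)
        (by omega) hcond2
      have hK₁T : K₁ ⊆ C \ T := hKu ▸ Finset.subset_union_left
      have hK₂T : K₂ ⊆ C \ T := hKu ▸ Finset.subset_union_right
      have hK₁r : M₁.rank (K₁ ∪ T) = M₁.rank T + K₁.card := by
        have h := hK₁
        rw [Indep, contract_rank] at h
        have : M₁.rank T ≤ M₁.rank (K₁ ∪ T) := M₁.rank_mono Finset.subset_union_right
        omega
      have hK₂r : M₂.rank (K₂ ∪ T) = M₂.rank T + K₂.card := by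
        have h := hK₂
        rw [Indep, contract_rank] at h
        have : M₂.rank T ≤ M₂.rank (K₂ ∪ T) := M₂.rank_mono Finset.subset_union_right
        omega
      refine ⟨J₁ ∪ K₁, J₂ ∪ K₂, ?_, ?_, ?_, ?_⟩
      · -- disjointness
        have hTd : Disjoint T (C \ T) := Finset.disjoint_sdiff
        rw [Finset.disjoint_union_left]
        constructor
        · rw [Finset.disjoint_union_right]
          exact ⟨hJd, Finset.disjoint_of_subset_left hJ₁T
            (Finset.disjoint_of_subset_right hK₂T hTd)⟩
        · rw [Finset.disjoint_union_right]
          exact ⟨Finset.disjoint_of_subset_right hJ₂T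
            (Finset.disjoint_of_subset_left hK₁T hTd.symm), hKd⟩
      · -- union
        have : (J₁ ∪ K₁) ∪ (J₂ ∪ K₂) = (J₁ ∪ J₂) ∪ (K₁ ∪ K₂) := by
          ext x; simp only [Finset.mem_union]; tauto
        rw [this, hJu, hKu, Finset.union_sdiff_of_subset hTC]
      · -- M₁-independence of J₁ ∪ K₁
        have hd : Disjoint J₁ K₁ := Finset.disjoint_of_subset_left hJ₁T
          (Finset.disjoint_of_subset_right hK₁T Finset.disjoint_sdiff)
        have hcard' : (J₁ ∪ K₁).card = J₁.card + K₁.card :=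
          Finset.card_union_of_disjoint hd
        have hsm := M₁.rank_submod (J₁ ∪ K₁) T
        have e1 : (J₁ ∪ K₁) ∪ T = K₁ ∪ T := by
          ext x
          simp only [Finset.mem_union]
          constructor
          · rintro (( h | h) | h)
            · exact Or.inr (hJ₁T h)
            · exact Or.inl h
            · exact Or.inr h
          · rintro (h | h)
            · exact Or.inl (Or.inr h)
            · exact Or.inr h
        have e2 : J₁ ⊆ (J₁ ∪ K₁) ∩ T := by
          intro x hx
          exact Finset.mem_inter.mpr ⟨Finset.mem_union_left _ hx, hJ₁T hx⟩
        have h2 := M₁.rank_mono e2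
        rw [e1] at hsm
        have hub := M₁.rank_le_card (J₁ ∪ K₁)
        rw [Indep]
        rw [hJ₁] at h2
        omega
      · -- M₂-independence of J₂ ∪ K₂
        have hd : Disjoint J₂ K₂ := Finset.disjoint_of_subset_left hJ₂T
          (Finset.disjoint_of_subset_right hK₂T Finset.disjoint_sdiff)
        have hcard' : (J₂ ∪ K₂).card = J₂.card + K₂.card :=
          Finset.card_union_of_disjoint hd
        have hsm := M₂.rank_submod (J₂ ∪ K₂) T
        have e1 : (J₂ ∪ K₂) ∪ T = K₂ ∪ T := by
          ext x
          simp only [Finset.mem_union]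
          constructor
          · rintro ((h | h) | h)
            · exact Or.inr (hJ₂T h)
            · exact Or.inl h
            · exact Or.inr h
          · rintro (h | h)
            · exact Or.inl (Or.inr h)
            · exact Or.inr h
        have e2 : J₂ ⊆ (J₂ ∪ K₂) ∩ T := by
          intro x hx
          exact Finset.mem_inter.mpr ⟨Finset.mem_union_left _ hx, hJ₂T hx⟩
        have h2 := M₂.rank_mono e2
        rw [e1] at hsm
        have hub := M₂.rank_le_card (J₂ ∪ K₂)
        rw [Indep]
        rw [hJ₂] at h2
        omega
    · -- no proper tight set: strict slack on proper subsets
      push_neg at htight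
      have hstrict : ∀ T ⊆ C, T ≠ C → T.Nonempty →
          T.card + 1 ≤ M₁.rank T + M₂.rank T := by
        intro T hTC hTneC hTne
        have h1 := hcond T hTC hTne
        have h2 := htight T hTC hTneC hTne
        omega
      obtain ⟨e, he⟩ := hCne
      have heC : ({e} : Finset (Fin n)) ⊆ C := Finset.singleton_subset_iff.mpr he
      have hesum : 1 ≤ M₁.rank {e} + M₂.rank {e} := by
        have := hcond {e} heC ⟨e, Finset.mem_singleton_self e⟩
        simpa using this
      -- a helper doing the asymmetric step, applied to (M₁,M₂) or (M₂,M₁)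
      have main : ∀ (N₁ N₂ : FinMatroid n), 1 ≤ N₁.rank {e} →
          (∀ T ⊆ C, T ≠ C → T.Nonempty → T.card + 1 ≤ N₁.rank T + N₂.rank T) →
          ∃ I₁ I₂ : Finset (Fin n), Disjoint I₁ I₂ ∧ I₁ ∪ I₂ = C ∧
            N₁.Indep I₁ ∧ N₂.Indep I₂ := by
        intro N₁ N₂ he1 hstr
        have hre : N₁.rank {e} = 1 :=
          Nat.le_antisymm (by simpa using N₁.rank_le_card {e}) he1
        have hCe : (C.erase e).card < C.card := Finset.card_erase_lt_of_mem he
        have hcond2 : ∀ S ⊆ C.erase e, S.Nonempty → S.card ≤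
            (N₁.contract {e}).rank S + N₂.rank S := by
          intro S hS hSne
          rw [contract_rank]
          have hSC : S ⊆ C := hS.trans (Finset.erase_subset e C)
          have hSneC : S ≠ C := by
            intro hh
            have : e ∈ S := hh ▸ he
            exact (Finset.notMem_erase e C) (hS this)
          have h1 := hstr S hSC hSneC hSne
          have m1 : N₁.rank S ≤ N₁.rank (S ∪ {e}) := N₁.rank_mono Finset.subset_union_left
          omega
        obtain ⟨K₁, K₂, hKd, hKu, hK₁, hK₂⟩ := ih (C.erase e) (N₁.contract {e}) N₂
          (by omega) hcond2
        have hK₁C : K₁ ⊆ C.erase e := hKu ▸ Finset.subset_union_left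
        have hK₂C : K₂ ⊆ C.erase e := hKu ▸ Finset.subset_union_right
        have heK₁ : e ∉ K₁ := fun hh => Finset.notMem_erase e C (hK₁C hh)
        have heK₂ : e ∉ K₂ := fun hh => Finset.notMem_erase e C (hK₂C hh)
        have hK₁r : N₁.rank (K₁ ∪ {e}) = K₁.card + 1 := by
          have hh := hK₁
          rw [Indep, contract_rank, hre] at hh
          have : N₁.rank {e} ≤ N₁.rank (K₁ ∪ {e}) := N₁.rank_mono Finset.subset_union_right
          rw [hre] at this
          omega
        refine ⟨insert e K₁, K₂, ?_, ?_, ?_, hK₂⟩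
        · rw [Finset.disjoint_insert_left]
          exact ⟨heK₂, hKd⟩
        · have : insert e K₁ ∪ K₂ = insert e (K₁ ∪ K₂) := by
            ext x; simp only [Finset.mem_union, Finset.mem_insert]; tauto
          rw [this, hKu, Finset.insert_erase he]
        · rw [Indep]
          have e3 : insert e K₁ = K₁ ∪ {e} := by
            ext x; simp only [Finset.mem_union, Finset.mem_insert, Finset.mem_singleton]
            tauto
          rw [e3, hK₁r, Finset.card_union_of_disjoint (by
            rw [Finset.disjoint_singleton_right]; exact heK₁)]
          simp
      by_cases he1 : 1 ≤ M₁.rank {e}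
      · exact main M₁ M₂ he1 hstrict
      · have he2 : 1 ≤ M₂.rank {e} := by omega
        obtain ⟨I₂, I₁, hd, hu, h₂, h₁⟩ := main M₂ M₁ he2 (by
          intro T hTC hTneC hTne
          have := hstrict T hTC hTneC hTne
          omega)
        exact ⟨I₁, I₂, hd.symm, by rw [← hu]; exact Finset.union_comm _ _, h₁, h₂⟩

end FinMatroid

namespace FinMatroid

variable {n : ℕ}

/-- Merging two "good" sets (f2 ≤ |·∩B|+1) whose intersection is a nonempty
subset of the independent set `B` yields a good set. -/
lemma good_union (M₁ M₂ : FinMatroid n) {B U T : Finset (Fin n)}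
    (hB : IndepD M₁ M₂ B)
    (hU : f2 M₁ M₂ U ≤ (U ∩ B).card + 1) (hT : f2 M₁ M₂ T ≤ (T ∩ B).card + 1)
    (hint : (T ∩ U).Nonempty) (hintB : T ∩ U ⊆ B) :
    f2 M₁ M₂ (U ∪ T) ≤ ((U ∪ T) ∩ B).card + 1 := by
  have hsm := f2_submod M₁ M₂ U T
  have hUT : U ∩ T = T ∩ U := Finset.inter_comm U T
  have hindep : (U ∩ T).card + 1 ≤ f2 M₁ M₂ (U ∩ T) := by
    rw [hUT]
    exact indep_f2 hB hintB hint
  have e1 : (U ∪ T) ∩ B = (U ∩ B) ∪ (T ∩ B) := Finset.union_inter_distrib_right U T B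
  have e2 : (U ∩ B) ∩ (T ∩ B) = U ∩ T := by
    ext x
    simp only [Finset.mem_inter]
    constructor
    · rintro ⟨⟨h1, _⟩, ⟨h2, _⟩⟩; exact ⟨h1, h2⟩
    · rintro ⟨h1, h2⟩
      have hxB : x ∈ B := hintB (Finset.mem_inter.mpr ⟨h2, h1⟩)
      exact ⟨⟨h1, hxB⟩, ⟨h2, hxB⟩⟩
  have e3 := Finset.card_union_add_card_inter (U ∩ B) (T ∩ B)
  rw [e2] at e3
  rw [e1]
  omega

/-- Folding `good_union` over a pairwise disjoint family all of whose members
meet `C₀` inside `B`. -/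
lemma good_sup (M₁ M₂ : FinMatroid n) {B C₀ : Finset (Fin n)}
    (hB : IndepD M₁ M₂ B)
    (hC₀ : f2 M₁ M₂ C₀ ≤ (C₀ ∩ B).card + 1) :
    ∀ 𝒮 : Finset (Finset (Fin n)),
      (∀ T ∈ 𝒮, f2 M₁ M₂ T ≤ (T ∩ B).card + 1 ∧ (T ∩ C₀).Nonempty ∧ T ∩ C₀ ⊆ B) →
      (∀ T ∈ 𝒮, ∀ T' ∈ 𝒮, T ≠ T' → Disjoint T T') →
      f2 M₁ M₂ (C₀ ∪ 𝒮.sup id) ≤ ((C₀ ∪ 𝒮.sup id) ∩ B).card + 1 := by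
  classical
  intro 𝒮
  induction 𝒮 using Finset.induction_on with
  | empty => intro _ _; simpa using hC₀
  | @insert T 𝒮 hT𝒮 ih =>
    intro hmem hdisj
    have ihres := ih (fun T' hT' => hmem T' (Finset.mem_insert_of_mem hT'))
      (fun T' hT' T'' hT'' hne =>
        hdisj T' (Finset.mem_insert_of_mem hT') T'' (Finset.mem_insert_of_mem hT'') hne)
    set U := C₀ ∪ 𝒮.sup id with hUdef
    have hTC₀ := hmem T (Finset.mem_insert_self T 𝒮)
    have hTsup : Disjoint T (𝒮.sup id) := by
      rw [Finset.disjoint_sup_right]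
      intro T' hT'
      exact hdisj T (Finset.mem_insert_self T 𝒮) T' (Finset.mem_insert_of_mem hT')
        (fun hh => hT𝒮 (hh ▸ hT'))
    have hTU : T ∩ U = T ∩ C₀ := by
      rw [hUdef, Finset.inter_union_distrib_left]
      rw [Finset.disjoint_iff_inter_eq_empty.mp hTsup]
      simp
    have hgood := good_union M₁ M₂ hB ihres hTC₀.1
      (by rw [hTU]; exact hTC₀.2.1) (by rw [hTU]; exact hTC₀.2.2)
    have e : U ∪ T = C₀ ∪ (insert T 𝒮).sup id := by
      rw [Finset.sup_insert, hUdef]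
      have : (id T ⊔ 𝒮.sup id) = T ∪ 𝒮.sup id := rfl
      rw [this]
      ext x
      simp only [Finset.mem_union]
      tauto
    rw [← e]
    exact hgood

end FinMatroid

namespace FinMatroid

variable {n : ℕ}

/-- Fundamental circuits exist over a maximal independent set and are good. -/
lemma exists_good_circuit {M₁ M₂ : FinMatroid n} {B : Finset (Fin n)} {i : Fin n}
    (hB : IndepD M₁ M₂ B) (hdep : ¬ IndepD M₁ M₂ (insert i B)) (hiB : i ∉ B) :
    ∃ C, CircuitD M₁ M₂ C ∧ C ⊆ insert i B ∧ i ∈ C ∧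
      f2 M₁ M₂ C ≤ (C ∩ B).card + 1 := by
  obtain ⟨C, hCsub, hC⟩ := exists_circuit hdep
  have hiC : i ∈ C := by
    by_contra hiC
    have : C ⊆ B := fun x hx => by
      rcases Finset.mem_insert.mp (hCsub hx) with rfl | hh
      · exact absurd hx hiC
      · exact hh
    exact hC.1 (indepD_subset hB this)
  refine ⟨C, hC, hCsub, hiC, ?_⟩
  have hcard : C.card ≤ (C ∩ B).card + 1 := by
    have : C ⊆ (C ∩ B) ∪ {i} := by
      intro x hx
      rcases Finset.mem_insert.mp (hCsub hx) with rfl | hh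
      · exact Finset.mem_union_right _ (Finset.mem_singleton_self x)
      · exact Finset.mem_union_left _ (Finset.mem_inter.mpr ⟨hx, hh⟩)
    calc C.card ≤ ((C ∩ B) ∪ {i}).card := Finset.card_le_card this
      _ ≤ (C ∩ B).card + 1 := by
          have := Finset.card_union_le (C ∩ B) ({i} : Finset (Fin n))
          simpa using this
  exact (circuitD_f2_le hC).trans hcard

/-- The key uncrossing construction: a maximal independent set supports a
family witnessing `rankD univ ≤ |B|`. -/
lemma exists_basisOn (M₁ M₂ : FinMatroid n) :
    ∃ B, BasisOn M₁ M₂ Finset.univ B := by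
  classical
  -- take a maximum-cardinality independent set
  set P := Finset.univ.powerset.filter (fun S => IndepD M₁ M₂ S) with hP
  have hPne : (∅ : Finset (Fin n)) ∈ P := by
    rw [hP, Finset.mem_filter]
    exact ⟨Finset.empty_mem_powerset _, indepD_empty M₁ M₂⟩
  obtain ⟨B, hBP, hBmax⟩ := Finset.exists_max_image P Finset.card ⟨∅, hPne⟩
  rw [hP, Finset.mem_filter] at hBP
  have hB : IndepD M₁ M₂ B := hBP.2
  have hmaximal : ∀ i, i ∉ B → ¬ IndepD M₁ M₂ (insert i B) := by
    intro i hiB hind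
    have hmem : insert i B ∈ P := by
      rw [hP, Finset.mem_filter]
      exact ⟨Finset.mem_powerset.mpr (Finset.subset_univ _), hind⟩
    have := hBmax _ hmem
    rw [Finset.card_insert_of_notMem hiB] at this
    omega
  -- choice of good circuits
  have hex : ∀ i : Fin n, i ∉ B → ∃ C, C ⊆ insert i B ∧ i ∈ C ∧
      f2 M₁ M₂ C ≤ (C ∩ B).card + 1 := by
    intro i hiB
    obtain ⟨C, _, h2, h3, h4⟩ := exists_good_circuit hB (hmaximal i hiB) hiB
    exact ⟨C, h2, h3, h4⟩
  -- the inductive construction of the covering family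
  have main : ∀ N : Finset (Fin n), (∀ i ∈ N, i ∉ B) →
      ∃ 𝒯 : Finset (Finset (Fin n)),
        (∀ T ∈ 𝒯, T.Nonempty ∧ T ⊆ B ∪ N ∧ f2 M₁ M₂ T ≤ (T ∩ B).card + 1) ∧
        (∀ T ∈ 𝒯, ∀ T' ∈ 𝒯, T ≠ T' → Disjoint T T') ∧
        N ⊆ 𝒯.sup id := by
    intro N
    induction N using Finset.induction_on with
    | empty => exact fun _ => ⟨∅, by simp, by simp, by simp⟩
    | @insert i N hiN ihN =>
      intro hsub
      have hiB : i ∉ B := hsub i (Finset.mem_insert_self i N)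
      obtain ⟨𝒯, h𝒯mem, h𝒯disj, h𝒯cov⟩ := ihN (fun j hj => hsub j (Finset.mem_insert_of_mem hj))
      obtain ⟨C₀, hC₀sub, hiC₀, hC₀good⟩ := hex i hiB
      set 𝒮 := 𝒯.filter (fun T => (T ∩ C₀).Nonempty) with h𝒮
      set Tstar := C₀ ∪ 𝒮.sup id with hTstar
      have h𝒮mem : ∀ T ∈ 𝒮, T ∈ 𝒯 ∧ (T ∩ C₀).Nonempty := by
        intro T hT; rw [h𝒮, Finset.mem_filter] at hT; exact hT
      have hiT : ∀ T ∈ 𝒯, i ∉ T := by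
        intro T hT hh
        rcases Finset.mem_union.mp ((h𝒯mem T hT).2.1 hh) with h | h
        · exact hiB h
        · exact hiN h
      have hTstar_good : f2 M₁ M₂ Tstar ≤ (Tstar ∩ B).card + 1 := by
        rw [hTstar]
        apply good_sup M₁ M₂ hB hC₀good
        · intro T hT
          obtain ⟨hT𝒯, hTne⟩ := h𝒮mem T hT
          refine ⟨(h𝒯mem T hT𝒯).2.2, hTne, ?_⟩
          intro x hx
          obtain ⟨hxT, hxC₀⟩ := Finset.mem_inter.mp hx
          rcases Finset.mem_insert.mp (hC₀sub hxC₀) with rfl | hh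
          · exact absurd hxT (hiT T hT𝒯)
          · exact hh
        · intro T hT T' hT' hne
          exact h𝒯disj T (h𝒮mem T hT).1 T' (h𝒮mem T' hT').1 hne
      refine ⟨insert Tstar (𝒯 \ 𝒮), ?_, ?_, ?_⟩
      · intro T hT
        rcases Finset.mem_insert.mp hT with rfl | hT'
        · refine ⟨⟨i, Finset.mem_union_left _ hiC₀⟩, ?_, hTstar_good⟩
          rw [hTstar]
          apply Finset.union_subset
          · intro x hx
            rcases Finset.mem_insert.mp (hC₀sub hx) with rfl | hh
            · exact Finset.mem_union_right _ (Finset.mem_insert_self x N)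
            · exact Finset.mem_union_left _ hh
          · intro x hx
            rw [Finset.mem_sup] at hx
            obtain ⟨T', hT', hxT'⟩ := hx
            have := (h𝒯mem T' (h𝒮mem T' hT').1).2.1 hxT'
            rcases Finset.mem_union.mp this with h | h
            · exact Finset.mem_union_left _ h
            · exact Finset.mem_union_right _ (Finset.mem_insert_of_mem h)
        · have hT𝒯 : T ∈ 𝒯 := (Finset.mem_sdiff.mp hT').1
          obtain ⟨hne, hsub', hgood⟩ := h𝒯mem T hT𝒯
          exact ⟨hne, hsub'.trans (Finset.union_subset_union_right
            (Finset.subset_insert i N)), hgood⟩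
      · -- pairwise disjointness
        have hTstar_disj : ∀ T ∈ 𝒯 \ 𝒮, Disjoint Tstar T := by
          intro T hT
          have hT𝒯 : T ∈ 𝒯 := (Finset.mem_sdiff.mp hT).1
          have hT𝒮 : T ∉ 𝒮 := (Finset.mem_sdiff.mp hT).2
          rw [hTstar, Finset.disjoint_union_left]
          constructor
          · rw [Finset.disjoint_iff_inter_eq_empty, Finset.inter_comm]
            by_contra hh
            apply hT𝒮
            rw [h𝒮, Finset.mem_filter]
            exact ⟨hT𝒯, Finset.nonempty_iff_ne_empty.mpr hh⟩
          · rw [Finset.disjoint_sup_left]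
            intro T' hT'
            refine h𝒯disj T' (h𝒮mem T' hT').1 T hT𝒯 ?_
            intro hh
            exact hT𝒮 (hh ▸ hT')
        intro T hT T' hT' hne
        rcases Finset.mem_insert.mp hT with rfl | hTm
        · rcases Finset.mem_insert.mp hT' with rfl | hTm'
          · exact absurd rfl hne
          · exact hTstar_disj T' hTm'
        · rcases Finset.mem_insert.mp hT' with rfl | hTm'
          · exact (hTstar_disj T hTm).symm
          · exact h𝒯disj T (Finset.mem_sdiff.mp hTm).1 T' (Finset.mem_sdiff.mp hTm').1 hne
      · -- coverage
        intro j hj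
        rw [Finset.mem_sup]
        rcases Finset.mem_insert.mp hj with rfl | hjN
        · exact ⟨Tstar, Finset.mem_insert_self _ _, by
            rw [hTstar]; exact Finset.mem_union_left _ hiC₀⟩
        · have := h𝒯cov hjN
          rw [Finset.mem_sup] at this
          obtain ⟨T, hT𝒯, hjT⟩ := this
          by_cases hT𝒮 : T ∈ 𝒮
          · refine ⟨Tstar, Finset.mem_insert_self _ _, ?_⟩
            rw [hTstar]
            exact Finset.mem_union_right _ (Finset.mem_sup.mpr ⟨T, hT𝒮, hjT⟩)
          · exact ⟨T, Finset.mem_insert_of_mem (Finset.mem_sdiff.mpr ⟨hT𝒯, hT𝒮⟩), hjT⟩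
  -- apply with N = complement of B
  obtain ⟨𝒯, h𝒯mem, h𝒯disj, h𝒯cov⟩ := main (Finset.univ.filter (fun i => i ∉ B))
    (fun i hi => (Finset.mem_filter.mp hi).2)
  have hvalid : ValidFamily Finset.univ 𝒯 :=
    ⟨fun T hT => ⟨Finset.subset_univ T, (h𝒯mem T hT).1⟩, h𝒯disj⟩
  have hbound : famValue M₁ M₂ Finset.univ 𝒯 ≤ B.card := by
    rw [famValue]
    classical
    have hdisjB : ∀ T ∈ 𝒯, ∀ T' ∈ 𝒯, T ≠ T' → Disjoint (T ∩ B) (T' ∩ B) :=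
      fun T hT T' hT' hne => Finset.disjoint_of_subset_left Finset.inter_subset_left
        (Finset.disjoint_of_subset_right Finset.inter_subset_left (h𝒯disj T hT T' hT' hne))
    have hsum : ∑ T ∈ 𝒯, (M₁.rank T + M₂.rank T - 1) ≤ ∑ T ∈ 𝒯, (T ∩ B).card := by
      apply Finset.sum_le_sum
      intro T hT
      have := (h𝒯mem T hT).2.2
      rw [f2] at this
      omega
    have hbi : ∑ T ∈ 𝒯, (T ∩ B).card = (𝒯.biUnion (fun T => T ∩ B)).card :=
      (Finset.card_biUnion hdisjB).symm
    have hbiB : 𝒯.biUnion (fun T => T ∩ B) ⊆ B := by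
      intro x hx
      obtain ⟨T, _, hxT⟩ := Finset.mem_biUnion.mp hx
      exact (Finset.mem_inter.mp hxT).2
    have hsd : Finset.univ \ 𝒯.sup id ⊆ B \ 𝒯.biUnion (fun T => T ∩ B) := by
      intro x hx
      rw [Finset.mem_sdiff] at hx ⊢
      have hxB : x ∈ B := by
        by_contra hxB
        exact hx.2 (h𝒯cov (Finset.mem_filter.mpr ⟨Finset.mem_univ x, hxB⟩))
      refine ⟨hxB, fun hh => ?_⟩
      obtain ⟨T, hT, hxT⟩ := Finset.mem_biUnion.mp hh
      exact hx.2 (Finset.mem_sup.mpr ⟨T, hT, (Finset.mem_inter.mp hxT).1⟩)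
    have := Finset.card_le_card hsd
    have hcards : (B \ 𝒯.biUnion (fun T => T ∩ B)).card +
        (𝒯.biUnion (fun T => T ∩ B)).card = B.card :=
      Finset.card_sdiff_add_card_eq_card hbiB
    omega
  have h1 : rankD M₁ M₂ Finset.univ ≤ B.card :=
    (rankD_le_famValue M₁ M₂ hvalid).trans hbound
  have h2 : rankD M₁ M₂ B ≤ rankD M₁ M₂ Finset.univ := rankD_mono M₁ M₂ (Finset.subset_univ B)
  have hBr : rankD M₁ M₂ B = B.card := hB
  exact ⟨B, Finset.subset_univ B, hBr, by omega⟩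

end FinMatroid

namespace FinMatroid

variable {n : ℕ}

/-- Any basis of `D` on `univ` is maximal independent. -/
lemma basis_insert_dep {M₁ M₂ : FinMatroid n} {B : Finset (Fin n)}
    (hB : BasisOn M₁ M₂ Finset.univ B) {i : Fin n} (hiB : i ∉ B) :
    ¬ IndepD M₁ M₂ (insert i B) := by
  intro hind
  have h1 : rankD M₁ M₂ (insert i B) ≤ rankD M₁ M₂ Finset.univ :=
    rankD_mono M₁ M₂ (Finset.subset_univ _)
  rw [← hB.2.2, hB.2.1] at h1
  rw [IndepD, Finset.card_insert_of_notMem hiB] at hind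
  omega

/-- Existence of the fundamental circuit. -/
lemma exists_fundCircuit {M₁ M₂ : FinMatroid n} {B : Finset (Fin n)}
    (hB : BasisOn M₁ M₂ Finset.univ B) {i : Fin n} (hiB : i ∉ B) :
    ∃ C, FundCircuitD M₁ M₂ B i C := by
  obtain ⟨C, h1, h2, h3, _⟩ := exists_good_circuit hB.2.1 (basis_insert_dep hB hiB) hiB
  exact ⟨C, h1, h2, h3⟩

/-- Circuits satisfy the matroid-union condition (here `NoCommonLoops` enters,
for singleton circuits). -/
lemma circuit_union_cond {M₁ M₂ : FinMatroid n} (h : NoCommonLoops M₁ M₂)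
    {C : Finset (Fin n)} (hC : CircuitD M₁ M₂ C) :
    ∀ T ⊆ C, T.Nonempty → T.card ≤ M₁.rank T + M₂.rank T := by
  intro T hTC hTne
  rcases eq_or_ne T C with rfl | hne
  · -- T = C
    by_cases h1 : T.card ≤ 1
    · have : T.card = 1 := le_antisymm h1 hTne.card_pos
      obtain ⟨x, rfl⟩ := Finset.card_eq_one.mp this
      rcases h x with hx | hx <;> simp only [Finset.card_singleton] <;> omega
    · obtain ⟨x, hx⟩ := hTne
      have herase : T.erase x ⊂ T := Finset.erase_ssubset hx
      have hind := hC.2 _ herase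
      have hene : (T.erase x).Nonempty := by
        rw [← Finset.card_pos, Finset.card_erase_of_mem hx]
        omega
      have hf := indep_f2 hind (Finset.Subset.refl _) hene
      have hmono := f2_mono M₁ M₂ (Finset.erase_subset x T)
      rw [Finset.card_erase_of_mem hx] at hf
      have hc : 0 < T.card := Finset.card_pos.mpr ⟨x, hx⟩
      simp only [f2] at hf hmono
      omega
  · have : IndepD M₁ M₂ T := hC.2 T (Finset.ssubset_iff_subset_ne.mpr ⟨hTC, hne⟩)
    have := indep_f2 this (Finset.Subset.refl T) hTne
    rw [f2] at this
    omega

end FinMatroid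

namespace FinMatroid

variable {n : ℕ}

/-- Every circuit of `D(M₁,M₂)` admits an initial decomposition. -/
lemma exists_initialDecomp {M₁ M₂ : FinMatroid n} (h : NoCommonLoops M₁ M₂)
    (wx wy : Fin n → ℝ) {C : Finset (Fin n)} (hC : CircuitD M₁ M₂ C) :
    ∃ I₁ I₂, InitialDecomp M₁ M₂ wx wy C I₁ I₂ := by
  classical
  obtain ⟨I₁, I₂, hd, hu, h1, h2⟩ :=
    union_partition C.card C M₁ M₂ (le_refl _) (circuit_union_cond h hC)
  set Pp := (C.powerset ×ˢ C.powerset).filter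
    (fun p => Decomp M₁ M₂ C p.1 p.2) with hPp
  have hmem : ∀ p : Finset (Fin n) × Finset (Fin n),
      p ∈ Pp ↔ Decomp M₁ M₂ C p.1 p.2 := by
    intro p
    rw [hPp, Finset.mem_filter, Finset.mem_product]
    constructor
    · exact fun hh => hh.2
    · intro hh
      refine ⟨⟨Finset.mem_powerset.mpr ?_, Finset.mem_powerset.mpr ?_⟩, hh⟩
      · exact hh.2.1 ▸ Finset.subset_union_left
      · exact hh.2.1 ▸ Finset.subset_union_right
  have hne : Pp.Nonempty := ⟨(I₁, I₂), (hmem (I₁, I₂)).mpr ⟨hd, hu, h1, h2⟩⟩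
  obtain ⟨p, hp, hmax⟩ := Finset.exists_max_image Pp (fun p => wtD wx wy p.1 p.2) hne
  exact ⟨p.1, p.2, (hmem p).mp hp,
    fun J₁ J₂ hJ => hmax (J₁, J₂) ((hmem (J₁, J₂)).mpr hJ)⟩

/-- Genericity: two decompositions of equal weight coincide. -/
lemma decomp_unique {wx wy : Fin n → ℝ} (hw : Generic wx wy)
    {M₁ M₂ : FinMatroid n} {C I₁ I₂ J₁ J₂ : Finset (Fin n)}
    (_hI : Decomp M₁ M₂ C I₁ I₂) (_hJ : Decomp M₁ M₂ C J₁ J₂)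
    (heq : wtD wx wy I₁ I₂ = wtD wx wy J₁ J₂) : I₁ = J₁ ∧ I₂ = J₂ := by
  classical
  rw [Generic] at hw
  rw [Fintype.linearIndependent_iff] at hw
  set g : Fin n ⊕ Fin n → ℚ := Sum.elim
    (fun j => (if j ∈ I₂ then (1 : ℚ) else 0) - (if j ∈ J₂ then (1 : ℚ) else 0))
    (fun j => (if j ∈ I₁ then (1 : ℚ) else 0) - (if j ∈ J₁ then (1 : ℚ) else 0)) with hg
  have hzero : ∑ v : Fin n ⊕ Fin n, g v • Sum.elim wx wy v = 0 := by
    rw [Fintype.sum_sum_type]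
    simp only [hg, Sum.elim_inl, Sum.elim_inr, sub_smul, ite_smul, one_smul, zero_smul]
    rw [Finset.sum_sub_distrib, Finset.sum_sub_distrib]
    simp only [Finset.sum_ite_mem, Finset.univ_inter]
    rw [wtD, wtD] at heq
    linarith
  have hgz := hw g hzero
  constructor
  · apply Finset.ext
    intro j
    have := hgz (Sum.inr j)
    rw [hg] at this
    simp only [Sum.elim_inr, sub_eq_zero] at this
    by_cases h1 : j ∈ I₁ <;> by_cases h2 : j ∈ J₁ <;>
      simp [h1, h2] at this ⊢
  · apply Finset.ext
    intro j
    have := hgz (Sum.inl j)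
    rw [hg] at this
    simp only [Sum.elim_inl, sub_eq_zero] at this
    by_cases h1 : j ∈ I₂ <;> by_cases h2 : j ∈ J₂ <;>
      simp [h1, h2] at this ⊢

end FinMatroid

namespace FinMatroid

variable {n : ℕ}

lemma extActive_or {M₁ M₂ : FinMatroid n} (h : NoCommonLoops M₁ M₂)
    (wx wy : Fin n → ℝ) {B : Finset (Fin n)} (hB : BasisOn M₁ M₂ Finset.univ B)
    {i : Fin n} (hiB : i ∉ B) :
    ExtActive1 M₁ M₂ wx wy B i ∨ ExtActive2 M₁ M₂ wx wy B i := by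
  obtain ⟨C, hC⟩ := exists_fundCircuit hB hiB
  obtain ⟨I₁, I₂, hI⟩ := exists_initialDecomp h wx wy hC.1
  have hiC : i ∈ I₁ ∪ I₂ := hI.1.2.1.symm ▸ hC.2.2
  rcases Finset.mem_union.mp hiC with hh | hh
  · exact Or.inl ⟨C, I₁, I₂, hC, hI, hh⟩
  · exact Or.inr ⟨C, I₁, I₂, hC, hI, hh⟩

lemma extActive_not_both {M₁ M₂ : FinMatroid n} {wx wy : Fin n → ℝ}
    (hw : Generic wx wy) {B : Finset (Fin n)} (hB : BasisOn M₁ M₂ Finset.univ B)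
    {i : Fin n} :
    ¬ (ExtActive1 M₁ M₂ wx wy B i ∧ ExtActive2 M₁ M₂ wx wy B i) := by
  rintro ⟨⟨C, I₁, I₂, hC, hI, hiI⟩, ⟨C', J₁, J₂, hC', hJ, hiJ⟩⟩
  have hBind : IndepD M₁ M₂ B := hB.2.1
  have hCC' : C = C' :=
    circuit_unique hBind hC.1 hC.2.1 hC.2.2 hC'.1 hC'.2.1 hC'.2.2
  subst hCC'
  have hwt : wtD wx wy I₁ I₂ = wtD wx wy J₁ J₂ :=
    le_antisymm (hJ.2 I₁ I₂ hI.1) (hI.2 J₁ J₂ hJ.1)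
  obtain ⟨hI₁, hI₂⟩ := decomp_unique hw hI.1 hJ.1 hwt
  subst hI₁; subst hI₂
  exact Finset.disjoint_left.mp hI.1.1 hiI hiJ

end FinMatroid

open FinMatroid in
theorem externalActivityComplex_pure' (n : ℕ) (M₁ M₂ : FinMatroid n)
    (h : NoCommonLoops M₁ M₂) (wx wy : Fin n → ℝ) (hw : Generic wx wy) :
    (∃ F : Finset (Fin n ⊕ Fin n), IsFacetOn M₁ M₂ wx wy Finset.univ F) ∧
    ∀ F : Finset (Fin n ⊕ Fin n), IsFacetOn M₁ M₂ wx wy Finset.univ F →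
      F.card = rankD M₁ M₂ Finset.univ + n := by
  classical
  constructor
  · -- existence of a facet
    obtain ⟨B, hB⟩ := exists_basisOn M₁ M₂
    set E₁ := Finset.univ.filter (fun i => i ∉ B ∧ ExtActive1 M₁ M₂ wx wy B i) with hE₁
    set E₂ := Finset.univ.filter (fun i => i ∉ B ∧ ExtActive2 M₁ M₂ wx wy B i) with hE₂
    refine ⟨((B ∪ E₁).image Sum.inl) ∪ ((B ∪ E₂).image Sum.inr), B, E₁, E₂, hB, ?_, ?_, rfl⟩
    · intro i
      rw [hE₁, Finset.mem_filter]
    · intro i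
      rw [hE₂, Finset.mem_filter]
  · -- purity
    rintro F ⟨B, E₁, E₂, hB, hE₁, hE₂, rfl⟩
    have hdisjF : Disjoint ((B ∪ E₁).image Sum.inl) ((B ∪ E₂).image Sum.inr) := by
      rw [Finset.disjoint_left]
      rintro a ha hb
      obtain ⟨x, _, rfl⟩ := Finset.mem_image.mp ha
      obtain ⟨y, _, hxy⟩ := Finset.mem_image.mp hb
      exact Sum.inl_ne_inr hxy.symm
    rw [Finset.card_union_of_disjoint hdisjF,
      Finset.card_image_of_injective _ Sum.inl_injective,
      Finset.card_image_of_injective _ Sum.inr_injective]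
    have hBE₁ : Disjoint B E₁ := by
      rw [Finset.disjoint_right]
      intro i hi
      exact ((hE₁ i).mp hi).2.1
    have hBE₂ : Disjoint B E₂ := by
      rw [Finset.disjoint_right]
      intro i hi
      exact ((hE₂ i).mp hi).2.1
    rw [Finset.card_union_of_disjoint hBE₁, Finset.card_union_of_disjoint hBE₂]
    have hE₁E₂ : Disjoint E₁ E₂ := by
      rw [Finset.disjoint_left]
      intro i h1 h2
      exact extActive_not_both hw hB ⟨((hE₁ i).mp h1).2.2, ((hE₂ i).mp h2).2.2⟩
    have hunion : E₁ ∪ E₂ = Finset.univ \ B := by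
      apply Finset.ext
      intro i
      rw [Finset.mem_union, Finset.mem_sdiff, hE₁ i, hE₂ i]
      constructor
      · rintro (⟨h1, h2, _⟩ | ⟨h1, h2, _⟩) <;> exact ⟨h1, h2⟩
      · rintro ⟨h1, h2⟩
        rcases extActive_or h wx wy hB h2 with hh | hh
        · exact Or.inl ⟨h1, h2, hh⟩
        · exact Or.inr ⟨h1, h2, hh⟩
    have hcards : E₁.card + E₂.card = n - B.card := by
      have := Finset.card_union_of_disjoint hE₁E₂
      rw [hunion, Finset.card_sdiff_of_subset (Finset.subset_univ B)] at this
      simp only [Finset.card_univ, Fintype.card_fin] at this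
      omega
    have hBcard : B.card = rankD M₁ M₂ Finset.univ := by
      rw [← hB.2.2, hB.2.1]
    have hBn : B.card ≤ n := by
      have := Finset.card_le_card (Finset.subset_univ B)
      simpa using this
    omega

open FinMatroid in
/-- The external activity complex `Δ_w(M₁,M₂)` is pure of dimension
`rank(D(M₁,M₂)) + n − 1`: it has a facet, and every facet has cardinality
`rank(D(M₁,M₂)) + n`. -/
theorem externalActivityComplex_pure (n : ℕ) (M₁ M₂ : FinMatroid n)
    (h : NoCommonLoops M₁ M₂) (wx wy : Fin n → ℝ) (hw : Generic wx wy) :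
    (∃ F : Finset (Fin n ⊕ Fin n), IsFacetOn M₁ M₂ wx wy Finset.univ F) ∧
    ∀ F : Finset (Fin n ⊕ Fin n), IsFacetOn M₁ M₂ wx wy Finset.univ F →
      F.card = rankD M₁ M₂ Finset.univ + n := by
  exact externalActivityComplex_pure' n M₁ M₂ h wx wy hw
end

section
/- Fix w = (w_x, w_y) ∈ ℝ^n × ℝ^n whose 2n entries are linearly independent over ℚ. For any point p ∈ ℝ^n, the bipartite multigraph G(p), whose vertex parts are the sets V_1 = {p_i − w_{x,i} : i ∈ [n]} and V_2 = {p_i − w_{y,i} : i ∈ [n]} of real numbers and whose edges are e_i = (p_i − w_{x,i}, p_i − w_{y,i}) for i ∈ [n], contains no cycle (it is a forest). -/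
private lemma sum_rotate_aux (h : ℕ → ℝ) (m : ℕ) (hm : 0 < m) :
    ∑ k ∈ Finset.range m, h ((k + 1) % m) = ∑ k ∈ Finset.range m, h k := by
  obtain ⟨t, rfl⟩ : ∃ t, m = t + 1 := ⟨m - 1, by omega⟩
  rw [Finset.sum_range_succ, Finset.sum_range_succ' h]
  have h1 : ∀ k ∈ Finset.range t, h ((k + 1) % (t + 1)) = h (k + 1) := by
    intro k hk
    have := Finset.mem_range.mp hk
    rw [Nat.mod_eq_of_lt (by omega)]
  rw [Finset.sum_congr rfl h1, Nat.mod_self]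

/-- For a weight vector `w = (w_x,w_y)` whose `2n` entries are `ℚ`-linearly
independent and any `p ∈ ℝⁿ`, the bipartite multigraph `G(p)` with edges
`e_i = (p_i − w_{x,i}, p_i − w_{y,i})` contains no cycle: there is no cyclic
sequence of `2ℓ ≥ 2` distinct edges whose consecutive edges alternately share
a vertex in `V₂` and in `V₁`. -/
theorem intersection_graph_is_forest (n : ℕ) (wx wy : Fin n → ℝ)
    (hw : LinearIndependent ℚ (Sum.elim wx wy)) (p : Fin n → ℝ) :
    ¬ ∃ (ℓ : ℕ) (f : ℕ → Fin n), 0 < ℓ ∧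
        Set.InjOn f (Set.Iio (2 * ℓ)) ∧
        ∀ k < 2 * ℓ,
          (k % 2 = 0 →
            p (f k) - wy (f k) =
              p (f ((k + 1) % (2 * ℓ))) - wy (f ((k + 1) % (2 * ℓ)))) ∧
          (k % 2 = 1 →
            p (f k) - wx (f k) =
              p (f ((k + 1) % (2 * ℓ))) - wx (f ((k + 1) % (2 * ℓ)))) := by
  rintro ⟨ℓ, f, hl, hinj, hcyc⟩
  set m := 2 * ℓ with hm
  have hm0 : 0 < m := by omega
  -- the key telescoping identity
  set Q : ℕ → ℝ := fun k =>
    (if k % 2 = 0 then wy (f (k % m)) else wx (f (k % m))) - p (f (k % m)) with hQ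
  set R : ℕ → ℝ := fun k =>
    (if k % 2 = 0 then wx (f (k % m)) else wy (f (k % m))) - p (f (k % m)) with hR
  have hQR : ∀ k < m, Q k = R ((k + 1) % m) := by
    intro k hk
    have hkm : k % m = k := Nat.mod_eq_of_lt hk
    have hpar : (k + 1) % m % 2 = (k + 1) % 2 := Nat.mod_mod_of_dvd _ ⟨ℓ, by omega⟩
    have hmm : (k + 1) % m % m = (k + 1) % m := Nat.mod_mod_of_dvd _ dvd_rfl
    rcases Nat.even_or_odd k with he | ho
    · have hk2 : k % 2 = 0 := Nat.even_iff.mp he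
      have hk12 : (k + 1) % 2 = 1 := by omega
      have := (hcyc k hk).1 hk2
      simp only [hQ, hR, hkm, hk2, hpar, hk12, hmm]
      norm_num
      linarith
    · have hk2 : k % 2 = 1 := Nat.odd_iff.mp ho
      have hk12 : (k + 1) % 2 = 0 := by omega
      have := (hcyc k hk).2 hk2
      simp only [hQ, hR, hkm, hk2, hpar, hk12, hmm]
      norm_num
      linarith
  have hsum : ∑ k ∈ Finset.range m,
      ((if k % 2 = 0 then (1 : ℝ) else -1) * (wy (f k) - wx (f k))) = 0 := by
    have h1 : ∑ k ∈ Finset.range m, Q k = ∑ k ∈ Finset.range m, R k := by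
      rw [Finset.sum_congr rfl (fun k hk => hQR k (Finset.mem_range.mp hk)),
        sum_rotate_aux R m hm0]
    have h2 : ∀ k ∈ Finset.range m,
        (if k % 2 = 0 then (1 : ℝ) else -1) * (wy (f k) - wx (f k)) = Q k - R k := by
      intro k hk
      have hkm : k % m = k := Nat.mod_eq_of_lt (Finset.mem_range.mp hk)
      simp only [hQ, hR, hkm]
      rcases Nat.even_or_odd k with he | ho
      · have h0 := Nat.even_iff.mp he
        simp only [h0]
        norm_num
      · have h1' := Nat.odd_iff.mp ho
        simp only [h1']
        norm_num
    rw [Finset.sum_congr rfl h2, Finset.sum_sub_distrib, h1, sub_self]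
  -- build the rational linear relation
  set c : ℕ → ℚ := fun k => if k % 2 = 0 then 1 else -1 with hc
  set g : Fin n ⊕ Fin n → ℚ := fun j =>
    Sum.elim
      (fun i => -∑ k ∈ Finset.range m, (if f k = i then c k else 0))
      (fun i => ∑ k ∈ Finset.range m, (if f k = i then c k else 0)) j with hg
  have hrel : ∑ j, g j • Sum.elim wx wy j = 0 := by
    rw [Fintype.sum_sum_type]
    simp only [hg, Sum.elim_inl, Sum.elim_inr]
    have hx : ∀ i : Fin n,
        (-∑ k ∈ Finset.range m, (if f k = i then c k else 0)) • wx i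
          = ∑ k ∈ Finset.range m, (if f k = i then -((c k : ℝ) * wx i) else 0) := by
      intro i
      rw [neg_smul, Finset.sum_smul, ← Finset.sum_neg_distrib]
      refine Finset.sum_congr rfl fun k _ => ?_
      rw [ite_smul, zero_smul, Rat.smul_def]
      split <;> simp
    have hy : ∀ i : Fin n,
        (∑ k ∈ Finset.range m, (if f k = i then c k else 0)) • wy i
          = ∑ k ∈ Finset.range m, (if f k = i then (c k : ℝ) * wy i else 0) := by
      intro i
      rw [Finset.sum_smul]
      refine Finset.sum_congr rfl fun k _ => ?_
      rw [ite_smul, zero_smul, Rat.smul_def]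
    rw [Finset.sum_congr rfl (fun i _ => hx i), Finset.sum_congr rfl (fun i _ => hy i),
      Finset.sum_comm, Finset.sum_comm (s := Finset.univ)]
    have : ∀ k ∈ Finset.range m,
        ((∑ i : Fin n, (if f k = i then -((c k : ℝ) * wx i) else 0))
          + ∑ i : Fin n, (if f k = i then (c k : ℝ) * wy i else 0))
        = (if k % 2 = 0 then (1 : ℝ) else -1) * (wy (f k) - wx (f k)) := by
      intro k _
      rw [Finset.sum_ite_eq, Finset.sum_ite_eq]
      simp only [Finset.mem_univ, if_pos, hc]

      split <;> ring
    rw [← Finset.sum_add_distrib, Finset.sum_congr rfl this, hsum]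
  have hzero := Fintype.linearIndependent_iff.mp hw g hrel
  have h0 := hzero (Sum.inr (f 0))
  simp only [hg, Sum.elim_inr] at h0
  have hone : ∑ k ∈ Finset.range m, (if f k = f 0 then c k else 0) = c 0 := by
    rw [Finset.sum_eq_single 0]
    · simp
    · intro k hk hk0
      rw [if_neg]
      intro hfk
      exact hk0 (hinj (Set.mem_Iio.mpr (Finset.mem_range.mp hk)) (Set.mem_Iio.mpr hm0) hfk)
    · intro h; exact absurd (Finset.mem_range.mpr hm0) h
  rw [hone] at h0
  simp [hc] at h0
end

section
/- Let S_0 = ∅ ⊊ S_1 ⊊ ... ⊊ S_k = E be a chain of subsets of a finite set E and a_• = (0, a_1, ..., a_k) a vector of non-negative integers. Then the collection of sets I ⊆ E satisfying |I ∩ S_i| ≤ a_i for all i = 0,...,k forms the independent sets of a matroid on E (the Schubert matroid Ω(S_•, a_•)), provided a_i ≤ a_{i+1} ≤ a_i + |S_{i+1} \ S_i| for all i. -/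
/-- Schubert matroids: given a chain `∅ = S 0 ⊊ S 1 ⊊ ... ⊊ S k = E` and
non-negative integers `a` with `a 0 = 0` and
`a i ≤ a (i+1) ≤ a i + |S (i+1) \ S i|`, the collection of sets `I` with
`|I ∩ S i| ≤ a i` for all `i ≤ k` is the family of independent sets of a
matroid on `E`: it contains the empty set, is closed under subsets, and
satisfies the augmentation axiom. -/
theorem schubert_matroid (n k : ℕ) (S : ℕ → Finset (Fin n)) (a : ℕ → ℕ)
    (hS0 : S 0 = ∅) (hSk : S k = Finset.univ)
    (hchain : ∀ i < k, S i ⊂ S (i + 1))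
    (ha0 : a 0 = 0)
    (hmono : ∀ i < k, a i ≤ a (i + 1))
    (hstep : ∀ i < k, a (i + 1) ≤ a i + (S (i + 1) \ S i).card) :
    (∀ i ≤ k, ((∅ : Finset (Fin n)) ∩ S i).card ≤ a i) ∧
    (∀ I J : Finset (Fin n), (∀ i ≤ k, (J ∩ S i).card ≤ a i) → I ⊆ J →
      ∀ i ≤ k, (I ∩ S i).card ≤ a i) ∧
    (∀ I J : Finset (Fin n),
      (∀ i ≤ k, (I ∩ S i).card ≤ a i) → (∀ i ≤ k, (J ∩ S i).card ≤ a i) →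
      I.card < J.card →
      ∃ e ∈ J \ I, ∀ i ≤ k, ((insert e I) ∩ S i).card ≤ a i) := by
  -- monotonicity of the chain
  have hSmono : ∀ i j, i ≤ j → j ≤ k → S i ⊆ S j := by
    intro i j hij hjk
    induction j with
    | zero => simpa [Nat.le_zero.mp hij] using Finset.Subset.refl _
    | succ m ih =>
      rcases Nat.lt_or_ge i (m + 1) with h | h
      · exact (ih (Nat.lt_succ_iff.mp h) (le_of_lt hjk)).trans
          (hchain m hjk).subset
      · have : i = m + 1 := le_antisymm hij h
        simp [this]
  refine ⟨?_, ?_, ?_⟩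
  · intro i _; simp
  · intro I J hJ hIJ i hik
    exact le_trans (Finset.card_le_card (Finset.inter_subset_inter hIJ
      (Finset.Subset.refl _))) (hJ i hik)
  · intro I J hI hJ hcard
    set T : Finset ℕ := (Finset.range (k + 1)).filter
      (fun i => a i ≤ (I ∩ S i).card) with hT
    have h0T : 0 ∈ T := by
      simp [hT, hS0, ha0]
    have hTne : T.Nonempty := ⟨0, h0T⟩
    set m := T.max' hTne with hm
    have hmT : m ∈ T := T.max'_mem hTne
    have hmk : m ≤ k := by
      have := (Finset.mem_filter.mp hmT).1
      exact Nat.lt_succ_iff.mp (Finset.mem_range.mp this)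
    have hIm : (I ∩ S m).card = a m :=
      le_antisymm (hI m hmk) (Finset.mem_filter.mp hmT).2
    have hJm : (J ∩ S m).card ≤ (I ∩ S m).card := hIm ▸ hJ m hmk
    -- ∃ e ∈ J \ S m with e ∉ I
    have hsd : (I \ S m).card < (J \ S m).card := by
      have h1 : (I ∩ S m).card + (I \ S m).card = I.card :=
        Finset.card_inter_add_card_sdiff I (S m)
      have h2 : (J ∩ S m).card + (J \ S m).card = J.card :=
        Finset.card_inter_add_card_sdiff J (S m)
      omega
    have : ¬ (J \ S m ⊆ I) := by
      intro hsub
      have : J \ S m ⊆ I \ S m := fun x hx =>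
        Finset.mem_sdiff.mpr ⟨hsub hx, (Finset.mem_sdiff.mp hx).2⟩
      exact absurd (Finset.card_le_card this) (not_le.mpr hsd)
    obtain ⟨e, heJS, heI⟩ := Finset.not_subset.mp this
    obtain ⟨heJ, heSm⟩ := Finset.mem_sdiff.mp heJS
    refine ⟨e, Finset.mem_sdiff.mpr ⟨heJ, heI⟩, ?_⟩
    intro i hik
    by_cases heSi : e ∈ S i
    · -- then i > m, so i is not tight
      have hmi : m < i := by
        by_contra h
        exact heSm (hSmono i m (not_lt.mp h) hmk heSi)
      have hiT : i ∉ T := fun hiT => absurd (T.le_max' i hiT) (not_le.mpr hmi)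
      have hlt : (I ∩ S i).card < a i := by
        have : ¬ a i ≤ (I ∩ S i).card := by
          intro h
          exact hiT (Finset.mem_filter.mpr ⟨Finset.mem_range.mpr
            (Nat.lt_succ_iff.mpr hik), h⟩)
        omega
      have : (insert e I) ∩ S i = insert e (I ∩ S i) :=
        Finset.insert_inter_of_mem heSi
      rw [this]
      calc (insert e (I ∩ S i)).card ≤ (I ∩ S i).card + 1 :=
            Finset.card_insert_le _ _
        _ ≤ a i := hlt
    · rw [Finset.insert_inter_of_notMem heSi]
      exact hI i hik
end
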